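/- The set of excited Young diagrams of the single row D_{(p)} inside the staircase D_{ρ_N} has cardinality exactly binom(N, p): excited moves keep the p boxes in distinct columns, boxes in distinct columns of the staircase determine the diagram, and every choice of p of the N columns is achievable. -/

import Mathlib

open scoped BigOperators Classical

noncomputable section

/-- A partition: a weakly decreasing sequence of naturals that is eventually zero. -/
structure Partn where
  part : ℕ → ℕ
  antitone' : ∀ ⦃i j : ℕ⦄, i ≤ j → part j ≤ part i
  bounded' : ∃ N, ∀ i, N ≤ i → part i = 0

namespace Partn

/-- The size `|λ|` of a partition: the sum of its parts. -/
def size (l : Partn) : ℕ := ∑' i, l.part i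

/-- The number of (nonzero) parts `ℓ(λ)`. -/
def numParts (l : Partn) : ℕ := Nat.card {i : ℕ // l.part i ≠ 0}

/-- Componentwise containment of partitions. -/
def le (l m : Partn) : Prop := ∀ i, l.part i ≤ m.part i

/-- Componentwise addition of partitions. -/
def add (l m : Partn) : Partn where
  part := fun i => l.part i + m.part i
  antitone' := fun _ _ h => Nat.add_le_add (l.antitone' h) (m.antitone' h)
  bounded' := by
    obtain ⟨N, hN⟩ := l.bounded'
    obtain ⟨M, hM⟩ := m.bounded'
    exact ⟨max N M, fun i hi => by
      try simp only []
      rw [hN i (le_trans (le_max_left _ _) hi), hM i (le_trans (le_max_right _ _) hi)]⟩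

/-- The dilation `N·λ` of a partition: multiply every part by `N`. -/
def smul (N : ℕ) (l : Partn) : Partn where
  part := fun i => N * l.part i
  antitone' := fun _ _ h => Nat.mul_le_mul_left _ (l.antitone' h)
  bounded' := by
    obtain ⟨M, hM⟩ := l.bounded'
    exact ⟨M, fun i hi => by (try simp only []); rw [hM i hi, Nat.mul_zero]⟩

/-- A strict partition: the nonzero parts are strictly decreasing. -/
def IsStrict (l : Partn) : Prop := ∀ i, l.part (i + 1) ≠ 0 → l.part (i + 1) < l.part i

end Partn

/-- A partition with two (possibly zero) parts. -/
def twoRow (a b : ℕ) (h : b ≤ a) : Partn where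
  part := fun i => if i = 0 then a else if i = 1 then b else 0
  antitone' := by intro i j hij; (try dsimp only); split_ifs <;> omega
  bounded' := ⟨2, fun i hi => by (try dsimp only); split_ifs <;> omega⟩

/-- The staircase partition `ρ_n = (n, n-1, …, 1)`. -/
def staircase (n : ℕ) : Partn where
  part := fun i => n - i
  antitone' := fun _ _ h => Nat.sub_le_sub_left h n
  bounded' := ⟨n, fun _ hi => Nat.sub_eq_zero_of_le hi⟩

/-- The box `(i, j)` (matrix coordinates, 0-based) lies in the skew shape `ν/λ`. -/
def InCell (nu lam : Partn) (i j : ℕ) : Prop := lam.part i ≤ j ∧ j < nu.part i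

/-- `T` is a semistandard Young tableau of skew shape `ν/λ` (entries `≥ 1` in the shape,
rows weakly increasing, columns strictly increasing, zero outside the shape). -/
def IsSSYT (nu lam : Partn) (T : ℕ → ℕ → ℕ) : Prop :=
  (∀ i j, ¬ InCell nu lam i j → T i j = 0) ∧
  (∀ i j, InCell nu lam i j → 1 ≤ T i j) ∧
  (∀ i j, InCell nu lam i j → InCell nu lam i (j + 1) → T i j ≤ T i (j + 1)) ∧
  (∀ i j, InCell nu lam i j → InCell nu lam (i + 1) j → T i j < T (i + 1) j)

/-- The number of entries of `T` (within the shape `ν/λ`) equal to `k`. -/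
def contentCount (nu lam : Partn) (T : ℕ → ℕ → ℕ) (k : ℕ) : ℕ :=
  Nat.card {p : ℕ × ℕ // InCell nu lam p.1 p.2 ∧ T p.1 p.2 = k}

/-- The number of entries equal to `k` among the cells weakly before `(i,j)` in the
row reading order (rows read right to left, top to bottom). -/
def prefixCount (nu lam : Partn) (T : ℕ → ℕ → ℕ) (i j k : ℕ) : ℕ :=
  Nat.card {p : ℕ × ℕ // InCell nu lam p.1 p.2 ∧ T p.1 p.2 = k ∧
    (p.1 < i ∨ (p.1 = i ∧ j ≤ p.2))}

/-- Ballotness of a tableau: in each prefix of the reading word there are at least as many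
`k`'s as `(k+1)`'s. -/
def IsBallot (nu lam : Partn) (T : ℕ → ℕ → ℕ) : Prop :=
  ∀ i j k, 1 ≤ k → prefixCount nu lam T i j (k + 1) ≤ prefixCount nu lam T i j k

/-- The set of ballot semistandard Young tableaux of shape `ν/λ` and content `μ`. -/
def LRset (lam mu nu : Partn) : Set (ℕ → ℕ → ℕ) :=
  {T | IsSSYT nu lam T ∧ (∀ k, contentCount nu lam T (k + 1) = mu.part k) ∧ IsBallot nu lam T}

/-- The Littlewood-Richardson coefficient `c_{λ,μ}^ν`, as the number of ballot semistandard
skew tableaux of shape `ν/λ` and content `μ`. -/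
def lrCoeff (lam mu nu : Partn) : ℕ := Nat.card (LRset lam mu nu)

/-- Membership in the Littlewood-Richardson polytope `P_{λ,μ}^ν`.  The coordinate `r k i`
records the (real) number of entries equal to `k+1` in row `i` (both 0-based); coordinates
outside the `ℓ(μ) × ℓ(ν)` range vanish. -/
def InLRPolytope (lam mu nu : Partn) (r : ℕ → ℕ → ℝ) : Prop :=
  (∀ k i, (mu.numParts ≤ k ∨ nu.numParts ≤ i) → r k i = 0) ∧
  -- (A) nonnegativity
  (∀ k i, 0 ≤ r k i) ∧
  -- (B) shape constraints
  (∀ i, (lam.part i : ℝ) + ∑ k ∈ Finset.range mu.numParts, r k i = (nu.part i : ℝ)) ∧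
  -- (C) content constraints
  (∀ k, ∑ i ∈ Finset.range nu.numParts, r k i = (mu.part k : ℝ)) ∧
  -- (D) tableau constraints
  (∀ i k, (lam.part (i + 1) : ℝ) + ∑ j ∈ Finset.range (k + 1), r j (i + 1)
      ≤ (lam.part i : ℝ) + ∑ j ∈ Finset.range k, r j i) ∧
  -- (E) ballot constraints
  (∀ i k, r (k + 1) i + ∑ i' ∈ Finset.range i, r (k + 1) i' ≤ ∑ i' ∈ Finset.range i, r k i')

/-- The `m`-th part (0-based) of the partition `τ(I)` associated to a finite set `I ⊆ ℕ`
(0-based version of `I ⊆ [r]`): it counts the naturals `j ∉ I` having at least `m+1`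
elements of `I` above them. -/
def tauPart (I : Finset ℕ) (m : ℕ) : ℕ :=
  (((Finset.range ((I.sup id) + 1)) \ I).filter
    (fun j => m + 1 ≤ (I.filter (fun e => j < e)).card)).card

/-- The partition `τ(I) = (i_d − d ≥ … ≥ i_1 − 1)` for `I = {i_1 < … < i_d}` (here encoded
0-based: `I ⊆ {0,…,r−1}` corresponds to `{i−1 : i ∈ [r]}`). -/
def tau (I : Finset ℕ) : Partn where
  part := tauPart I
  antitone' := by
    intro i j hij
    apply Finset.card_le_card
    apply Finset.monotone_filter_right
    intro x hx
    omega
  bounded' := ⟨I.card, fun m hm => by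
    unfold tauPart
    convert Finset.card_empty
    rw [Finset.filter_eq_empty_iff]
    intro j _
    have := Finset.card_filter_le I (fun e => j < e)
    omega⟩
/-! ### Shifted diagrams, marked tableaux, and Stembridge's rule -/

/-- The box `(i,j)` (0-based) lies in the shifted skew diagram `ν/λ`
(rows of the shifted diagram of `ν` are indented). -/
def InShifted (nu lam : Partn) (i j : ℕ) : Prop :=
  i ≤ j ∧ j < nu.part i + i ∧ lam.part i + i ≤ j

/-- A marked (shifted) semistandard tableau of shifted skew shape `ν/λ`, with entries encoded
as naturals `e ≥ 1`: `e = 2k` encodes the unprimed letter `k`, `e = 2k−1` encodes the primed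
letter `k'` (so the encoding respects `1' < 1 < 2' < 2 < ⋯`).  Rows and columns weakly
increase, primed letters do not repeat in a row, unprimed letters do not repeat in a column,
and no primed letter appears on the main diagonal. -/
def IsMarkedSSYT (nu lam : Partn) (T : ℕ → ℕ → ℕ) : Prop :=
  (∀ i j, ¬ InShifted nu lam i j → T i j = 0) ∧
  (∀ i j, InShifted nu lam i j → 1 ≤ T i j) ∧
  (∀ i j, InShifted nu lam i j → InShifted nu lam i (j + 1) → T i j ≤ T i (j + 1)) ∧
  (∀ i j, InShifted nu lam i j → InShifted nu lam (i + 1) j → T i j ≤ T (i + 1) j) ∧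
  (∀ i j, InShifted nu lam i j → InShifted nu lam i (j + 1) → Odd (T i j) →
    T i j < T i (j + 1)) ∧
  (∀ i j, InShifted nu lam i j → InShifted nu lam (i + 1) j → Even (T i j) →
    T i j < T (i + 1) j) ∧
  (∀ i, InShifted nu lam i i → ¬ Odd (T i i))

/-- The reading word of a (shifted skew) tableau: rows are read left to right, starting with
the bottom row. -/
def readWord (nu lam : Partn) (T : ℕ → ℕ → ℕ) : List ℕ :=
  ((List.range (nu.size + 1)).reverse).flatMap (fun i =>
    (List.range (2 * nu.size + 1)).filterMap (fun j =>
      if InShifted nu lam i j then some (T i j) else none))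

/-- Stembridge's statistic `JS_i(j)` of a marked word `w` (entries encoded as above):
for `j ≤ n` it counts unprimed `i`'s among the last `j` letters; for `j > n` it adds the
number of primed `i`'s among the first `j − n` letters. -/
def JS (w : List ℕ) (i j : ℕ) : ℕ :=
  if j ≤ w.length then (w.drop (w.length - j)).count (2 * i)
  else w.count (2 * i) + (w.take (j - w.length)).count (2 * i - 1)

/-- A marked word is proto-ballot if whenever `JS_i(j) = JS_{i−1}(j)` the appropriate letter
is forbidden. -/
def ProtoBallot (w : List ℕ) : Prop :=
  ∀ i, 1 ≤ i → ∀ j, JS w i j = JS w (i - 1) j →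
    (j < w.length →
      w.getD (w.length - j - 1) 0 ≠ 2 * i ∧ w.getD (w.length - j - 1) 0 ≠ 2 * i - 1) ∧
    (w.length ≤ j → j < 2 * w.length →
      w.getD (j - w.length) 0 ≠ 2 * (i - 1) ∧ w.getD (j - w.length) 0 ≠ 2 * i - 1)

/-- A marked word is ballot if it is proto-ballot and, for each value `i`, the leftmost
letter of value `i` is unprimed. -/
def BallotWord (w : List ℕ) : Prop :=
  ProtoBallot w ∧
  ∀ i, 1 ≤ i → ∀ k, w.getD k 0 = 2 * i - 1 → ∃ k' < k, w.getD k' 0 = 2 * i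

/-- The shifted Littlewood-Richardson coefficient `o_{λ,μ}^ν` via Stembridge's rule:
the number of marked shifted semistandard tableaux of shifted skew shape `ν/λ` and
content `μ` whose reading word is ballot. -/
def shiftedLR (lam mu nu : Partn) : ℕ :=
  Nat.card {T : ℕ → ℕ → ℕ //
    IsMarkedSSYT nu lam T ∧
    (∀ k, 1 ≤ k →
      Nat.card {p : ℕ × ℕ // InShifted nu lam p.1 p.2 ∧ (T p.1 p.2 + 1) / 2 = k}
        = mu.part (k - 1)) ∧
    BallotWord (readWord nu lam T)}

/-! ### Excited Young diagrams -/

/-- The shifted diagram `D_λ` of a strict partition (0-based coordinates). -/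
def shDiagram (l : Partn) : Set (ℕ × ℕ) := {p | p.1 ≤ p.2 ∧ p.2 < l.part p.1 + p.1}

/-- An elementary excitation inside `D_λ`: a box `x ∈ C` moves to `x + (1,1)` provided the
needed boxes lie in `D_λ \ C`. -/
def ExcStep (lam : Partn) (C C' : Set (ℕ × ℕ)) : Prop :=
  ∃ x ∈ C,
    ((x.1 = x.2 ∧ (x.1, x.2 + 1) ∈ shDiagram lam \ C ∧
        (x.1 + 1, x.2 + 1) ∈ shDiagram lam \ C) ∨
      (x.1 ≠ x.2 ∧ (x.1 + 1, x.2) ∈ shDiagram lam \ C ∧ (x.1, x.2 + 1) ∈ shDiagram lam \ C ∧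
        (x.1 + 1, x.2 + 1) ∈ shDiagram lam \ C)) ∧
    C' = insert (x.1 + 1, x.2 + 1) (C \ {x})

/-- The set `E_λ(μ)` of excited Young diagrams of `D_μ` inside `D_λ`. -/
def EYD (lam mu : Partn) : Set (Set (ℕ × ℕ)) :=
  {C | Relation.ReflTransGen (ExcStep lam) (shDiagram mu) C}
/-! ### Jeu de taquin for (unshifted) standard skew tableaux -/

/-- A filling of the plane by naturals; the value `0` denotes an empty box. -/
abbrev Filling := ℕ × ℕ → ℕ

/-- One elementary move of the hole during a jeu de taquin slide: the hole (first component)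
swaps with the smaller of the labels to its east and south (a missing label counts as
absent). -/
def HoleStep : (ℕ × ℕ) × Filling → (ℕ × ℕ) × Filling → Prop := fun s t =>
  (t.1 = (s.1.1, s.1.2 + 1) ∧ s.2 (s.1.1, s.1.2 + 1) ≠ 0 ∧
      (s.2 (s.1.1 + 1, s.1.2) = 0 ∨ s.2 (s.1.1, s.1.2 + 1) < s.2 (s.1.1 + 1, s.1.2)) ∧
      t.2 = Function.update (Function.update s.2 s.1 (s.2 (s.1.1, s.1.2 + 1)))
        (s.1.1, s.1.2 + 1) 0) ∨
  (t.1 = (s.1.1 + 1, s.1.2) ∧ s.2 (s.1.1 + 1, s.1.2) ≠ 0 ∧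
      (s.2 (s.1.1, s.1.2 + 1) = 0 ∨ s.2 (s.1.1 + 1, s.1.2) < s.2 (s.1.1, s.1.2 + 1)) ∧
      t.2 = Function.update (Function.update s.2 s.1 (s.2 (s.1.1 + 1, s.1.2)))
        (s.1.1 + 1, s.1.2) 0)

/-- The jeu de taquin slide of the filling `f` into the box `c`: iterate hole moves until
the hole has no labels to its east or south. -/
def SlideTo (f : Filling) (c : ℕ × ℕ) (f' : Filling) : Prop :=
  ∃ d : ℕ × ℕ, Relation.ReflTransGen HoleStep (c, f) (d, f') ∧
    f' (d.1, d.2 + 1) = 0 ∧ f' (d.1 + 1, d.2) = 0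

/-- `c` is an inner corner of the inner shape `S`: a maximally southeast box of `S`. -/
def IsInnerCorner (S : Set (ℕ × ℕ)) (c : ℕ × ℕ) : Prop :=
  c ∈ S ∧ (c.1 + 1, c.2) ∉ S ∧ (c.1, c.2 + 1) ∉ S

/-- One jeu de taquin slide step on a pair (inner shape, filling). -/
def JdtStep : Set (ℕ × ℕ) × Filling → Set (ℕ × ℕ) × Filling → Prop := fun s t =>
  ∃ c, IsInnerCorner s.1 c ∧ SlideTo s.2 c t.2 ∧ t.1 = s.1 \ {c}

/-- The filling `f`, whose inner shape is `S`, rectifies (by some sequence of jeu de taquin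
slides into inner corners) to the straight-shape filling `g`. -/
def RectifiesTo (S : Set (ℕ × ℕ)) (f g : Filling) : Prop :=
  Relation.ReflTransGen JdtStep (S, f) (∅, g)

/-- The (unshifted) Young diagram of a partition, as a set of boxes. -/
def yDiagram (l : Partn) : Set (ℕ × ℕ) := {p | p.2 < l.part p.1}

/-- `f` is a standard Young tableau of skew shape `ν/λ`: a bijective filling of the shape by
`1, …, |ν| − |λ|` with strictly increasing rows and columns. -/
def IsStdFilling (nu lam : Partn) (f : Filling) : Prop :=
  (∀ p : ℕ × ℕ, f p ≠ 0 ↔ InCell nu lam p.1 p.2) ∧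
  (∀ p q : ℕ × ℕ, f p ≠ 0 → f q ≠ 0 → f p = f q → p = q) ∧
  (∀ p, f p ≤ nu.size - lam.size) ∧
  (∀ m, 1 ≤ m → m ≤ nu.size - lam.size → ∃ p, f p = m) ∧
  (∀ i j, InCell nu lam i j → InCell nu lam i (j + 1) → f (i, j) < f (i, j + 1)) ∧
  (∀ i j, InCell nu lam i j → InCell nu lam (i + 1) j → f (i, j) < f (i + 1, j))

/-- The superstandard tableau `S_μ`: the boxes of `μ` are filled with `1, 2, 3, …` in
reading order, row by row. -/
def superStd (mu : Partn) : Filling := fun p =>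
  if p.2 < mu.part p.1 then (∑ k ∈ Finset.range p.1, mu.part k) + p.2 + 1 else 0

/-- Standardization of a semistandard skew tableau: entries equal to `k` are renumbered
left to right, after all entries smaller than `k`. -/
def standardize (nu lam : Partn) (T : ℕ → ℕ → ℕ) : Filling := fun p =>
  if InCell nu lam p.1 p.2 then
    Nat.card {q : ℕ × ℕ // InCell nu lam q.1 q.2 ∧
      (T q.1 q.2 < T p.1 p.2 ∨ (T q.1 q.2 = T p.1 p.2 ∧ q.2 < p.2))} + 1
  else 0

/-! ### Equivariant data for the orthogonal/Lagrangian Grassmannians -/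

/-- The substitution `α_1 ↦ 2γ_1`, `α_i ↦ γ_i` (`i > 1`), as an algebra map on polynomials
(variables indexed by `ℕ`, variable `0` playing the role of the first simple root). -/
def substA : MvPolynomial ℕ ℚ →ₐ[ℚ] MvPolynomial ℕ ℚ :=
  MvPolynomial.bind₁ (fun i => if i = 0 then 2 * MvPolynomial.X 0 else MvPolynomial.X i)

/-- A strict partition contained in the staircase `ρ_n`. -/
def InDom (n : ℕ) (p : Partn) : Prop := p.IsStrict ∧ Partn.le p (staircase n)

/-- The strict partitions inside `ρ_n` obtained from `λ` by adding one box. -/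
def addBox (n : ℕ) (lam : Partn) : Set Partn :=
  {pi | InDom n pi ∧ Partn.le lam pi ∧ pi.size = lam.size + 1}

/-- The strict partitions inside `ρ_n` obtained from `ν` by removing one box. -/
def subBox (n : ℕ) (nu : Partn) : Set Partn :=
  {rho | InDom n rho ∧ Partn.le rho nu ∧ rho.size + 1 = nu.size}
end
namespace EydRow

/-- Number of elements of `S` below `j`. -/
def rnk (S : Finset ℕ) (j : ℕ) : ℕ := (S.filter (fun e => e < j)).card

/-- The excited diagram associated to a set of columns. -/
def diag (S : Finset ℕ) : Set (ℕ × ℕ) := {q | q.2 ∈ S ∧ q.1 = q.2 - rnk S q.2}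

lemma mem_diag {S : Finset ℕ} {a b : ℕ} : (a, b) ∈ diag S ↔ b ∈ S ∧ a = b - rnk S b :=
  Iff.rfl

lemma rnk_le (S : Finset ℕ) (j : ℕ) : rnk S j ≤ j := by
  have : S.filter (fun e => e < j) ⊆ Finset.range j := by
    intro e he; simp only [Finset.mem_filter] at he; simpa using he.2
  simpa [rnk] using Finset.card_le_card this

lemma rnk_succ_mem {S : Finset ℕ} {j : ℕ} (hj : j ∈ S) :
    rnk S (j + 1) = rnk S j + 1 := by
  unfold rnk
  have : S.filter (fun e => e < j + 1) = insert j (S.filter (fun e => e < j)) := by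
    ext e
    simp only [Finset.mem_filter, Finset.mem_insert]
    constructor
    · rintro ⟨he, hlt⟩
      rcases Nat.lt_succ_iff_lt_or_eq.mp hlt with h | h
      · exact Or.inr ⟨he, h⟩
      · exact Or.inl h
    · rintro (rfl | ⟨he, hlt⟩)
      · exact ⟨hj, Nat.lt_succ_self _⟩
      · exact ⟨he, Nat.lt_succ_of_lt hlt⟩
  rw [this, Finset.card_insert_of_notMem (by simp)]

lemma rnk_succ_not_mem {S : Finset ℕ} {j : ℕ} (hj : j ∉ S) :
    rnk S (j + 1) = rnk S j := by
  unfold rnk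
  congr 1
  ext e
  simp only [Finset.mem_filter]
  constructor
  · rintro ⟨he, hlt⟩
    refine ⟨he, ?_⟩
    rcases Nat.lt_succ_iff_lt_or_eq.mp hlt with h | rfl
    · exact h
    · exact absurd he hj
  · rintro ⟨he, hlt⟩; exact ⟨he, Nat.lt_succ_of_lt hlt⟩

lemma rnk_swap {S : Finset ℕ} {j : ℕ} (hj : j ∈ S) (hj1 : j + 1 ∉ S) (m : ℕ) :
    rnk (insert (j + 1) (S.erase j)) m = if m = j + 1 then rnk S j else rnk S m := by
  unfold rnk
  rcases lt_trichotomy m (j + 1) with hm | rfl | hm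
  · rw [if_neg (by omega)]
    congr 1
    ext e
    simp only [Finset.mem_filter, Finset.mem_insert, Finset.mem_erase]
    have h1 : e < m → e ≠ j + 1 := by omega
    have h2 : e < m → e ≠ j := by omega
    tauto
  · rw [if_pos rfl]
    have : (insert (j + 1) (S.erase j)).filter (fun e => e < j + 1)
        = S.filter (fun e => e < j) := by
      ext e
      simp only [Finset.mem_filter, Finset.mem_insert, Finset.mem_erase]
      constructor
      · rintro ⟨(rfl | ⟨hne, he⟩), hlt⟩
        · omega
        · exact ⟨he, by omega⟩
      · rintro ⟨he, hlt⟩; exact ⟨Or.inr ⟨by omega, he⟩, by omega⟩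
    rw [this]
  · rw [if_neg (by omega)]
    have : (insert (j + 1) (S.erase j)).filter (fun e => e < m)
        = insert (j + 1) ((S.filter (fun e => e < m)).erase j) := by
      ext e
      simp only [Finset.mem_filter, Finset.mem_insert, Finset.mem_erase]
      constructor
      · rintro ⟨(rfl | ⟨hne, he⟩), hlt⟩
        · exact Or.inl rfl
        · exact Or.inr ⟨hne, he, hlt⟩
      · rintro (rfl | ⟨hne, he, hlt⟩)
        · exact ⟨Or.inl rfl, hm⟩
        · exact ⟨Or.inr ⟨hne, he⟩, hlt⟩
    rw [this, Finset.card_insert_of_notMem (by simp [hj1]),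
      Finset.card_erase_of_mem (by simp [Finset.mem_filter, hj]; omega)]
    have : j ∈ S.filter (fun e => e < m) := by simp [Finset.mem_filter, hj]; omega
    have hpos : 0 < (S.filter (fun e => e < m)).card := Finset.card_pos.mpr ⟨j, this⟩
    omega

lemma diag_swap {S : Finset ℕ} {j : ℕ} (hj : j ∈ S) (hj1 : j + 1 ∉ S) :
    diag (insert (j + 1) (S.erase j))
      = insert (j - rnk S j + 1, j + 1) (diag S \ {(j - rnk S j, j)}) := by
  have hr := rnk_le S j
  ext ⟨a, b⟩
  have hrw := rnk_swap hj hj1 b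
  simp only [mem_diag, Set.mem_insert_iff, Set.mem_diff, Set.mem_singleton_iff,
    Prod.mk.injEq, Finset.mem_insert, Finset.mem_erase]
  by_cases hb : b = j + 1
  · subst hb
    rw [if_pos rfl] at hrw
    rw [hrw]
    constructor
    · rintro ⟨-, rfl⟩
      exact Or.inl ⟨by omega, rfl⟩
    · rintro (⟨h1, -⟩ | ⟨⟨hbS, -⟩, -⟩)
      · exact ⟨Or.inl rfl, by omega⟩
      · exact absurd hbS hj1
  · rw [if_neg hb] at hrw
    rw [hrw]
    by_cases hbj : b = j
    · subst hbj
      constructor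
      · rintro ⟨(h | ⟨hne, -⟩), -⟩
        · omega
        · exact absurd rfl hne
      · rintro (⟨-, h⟩ | ⟨⟨-, rfl⟩, hne⟩)
        · omega
        · exact absurd ⟨rfl, rfl⟩ hne
    · constructor
      · rintro ⟨(h | ⟨-, hbS⟩), rfl⟩
        · exact absurd h hb
        · exact Or.inr ⟨⟨hbS, rfl⟩, fun h => hbj h.2⟩
      · rintro (⟨-, h⟩ | ⟨⟨hbS, rfl⟩, -⟩)
        · exact absurd h hb
        · exact ⟨Or.inr ⟨hbj, hbS⟩, rfl⟩

lemma mem_shDiagram_staircase {N a b : ℕ} :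
    (a, b) ∈ shDiagram (staircase N) ↔ a ≤ b ∧ b < N := by
  show a ≤ b ∧ b < N - a + a ↔ _
  omega

lemma shDiagram_row {p : ℕ} :
    shDiagram (twoRow p 0 (Nat.zero_le p)) = {q : ℕ × ℕ | q.1 = 0 ∧ q.2 < p} := by
  ext ⟨a, b⟩
  simp only [shDiagram, twoRow, Set.mem_setOf_eq]
  split_ifs <;> omega

lemma rnk_range (p j : ℕ) : rnk (Finset.range p) j = min j p := by
  unfold rnk
  have : (Finset.range p).filter (fun e => e < j) = Finset.range (min j p) := by
    ext e; simp only [Finset.mem_filter, Finset.mem_range]; omega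
  rw [this, Finset.card_range]

lemma diag_range (p : ℕ) :
    diag (Finset.range p) = shDiagram (twoRow p 0 (Nat.zero_le p)) := by
  rw [shDiagram_row]
  ext ⟨a, b⟩
  simp only [mem_diag, Set.mem_setOf_eq, Finset.mem_range, rnk_range]
  omega

/-- The elementary excitation moving the box of column `j` to column `j+1`. -/
lemma exc_step_diag {N : ℕ} {S : Finset ℕ} {j : ℕ} (hj : j ∈ S) (hj1 : j + 1 ∉ S)
    (hN : j + 1 < N) :
    ExcStep (staircase N) (diag S) (diag (insert (j + 1) (S.erase j))) := by
  have hr : rnk S j ≤ j := rnk_le S j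
  refine ⟨(j - rnk S j, j), ⟨hj, rfl⟩, ?_, by rw [diag_swap hj hj1]⟩
  have hnot1 : (j - rnk S j, j + 1) ∉ diag S := by
    rw [mem_diag]; rintro ⟨h, -⟩; exact hj1 h
  have hnot2 : (j - rnk S j + 1, j + 1) ∉ diag S := by
    rw [mem_diag]; rintro ⟨h, -⟩; exact hj1 h
  rcases Nat.eq_zero_or_pos (rnk S j) with hr0 | hr0
  · left
    refine ⟨show j - rnk S j = j by omega, ⟨?_, hnot1⟩, ⟨?_, hnot2⟩⟩
    · exact (mem_shDiagram_staircase (a := j - rnk S j) (b := j + 1)).mpr ⟨by omega, hN⟩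
    · exact (mem_shDiagram_staircase (a := j - rnk S j + 1) (b := j + 1)).mpr
        ⟨by omega, hN⟩
  · right
    refine ⟨show j - rnk S j ≠ j by omega,
      ⟨(mem_shDiagram_staircase (a := j - rnk S j + 1) (b := j)).mpr
        ⟨by omega, by omega⟩, ?_⟩,
      ⟨(mem_shDiagram_staircase (a := j - rnk S j) (b := j + 1)).mpr ⟨by omega, hN⟩,
        hnot1⟩,
      ⟨(mem_shDiagram_staircase (a := j - rnk S j + 1) (b := j + 1)).mpr
        ⟨by omega, hN⟩, hnot2⟩⟩
    show (j - rnk S j + 1, j) ∉ diag S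
    rw [mem_diag]
    rintro ⟨-, h⟩
    omega

/-- Forward analysis of a step out of `diag S`. -/
lemma step_forward {N : ℕ} {S : Finset ℕ} {C : Set (ℕ × ℕ)}
    (h : ExcStep (staircase N) (diag S) C) :
    ∃ j ∈ S, j + 1 ∉ S ∧ j + 1 < N ∧ C = diag (insert (j + 1) (S.erase j)) := by
  obtain ⟨⟨a, b⟩, hx, hcond, hC⟩ := h
  rw [mem_diag] at hx
  obtain ⟨hbS, rfl⟩ := hx
  have hnot1 : (b - rnk S b, b + 1) ∉ diag S := by
    rcases hcond with ⟨-, ⟨-, h⟩, -⟩ | ⟨-, -, ⟨-, h⟩, -⟩ <;> exact h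
  have hD : (b - rnk S b + 1, b + 1) ∈ shDiagram (staircase N) := by
    rcases hcond with ⟨-, -, ⟨h, -⟩⟩ | ⟨-, -, -, ⟨h, -⟩⟩ <;> exact h
  have hb1 : b + 1 ∉ S := by
    intro hmem
    apply hnot1
    rw [mem_diag, rnk_succ_mem hbS]
    exact ⟨hmem, by omega⟩
  have hbN : b + 1 < N := (mem_shDiagram_staircase.mp hD).2
  exact ⟨b, hbS, hb1, hbN, by rw [hC, diag_swap hbS hb1]⟩

lemma diag_injective : Function.Injective diag := by
  intro S T h
  ext j
  constructor
  · intro hj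
    have : (j - rnk S j, j) ∈ diag S := ⟨hj, rfl⟩
    rw [h] at this
    exact this.1
  · intro hj
    have : (j - rnk T j, j) ∈ diag T := ⟨hj, rfl⟩
    rw [← h] at this
    exact this.1

lemma forward {N p : ℕ} (hp : p ≤ N) {C : Set (ℕ × ℕ)}
    (hC : C ∈ EYD (staircase N) (twoRow p 0 (Nat.zero_le p))) :
    ∃ S : Finset ℕ, S ⊆ Finset.range N ∧ S.card = p ∧ C = diag S := by
  induction hC with
  | refl =>
    exact ⟨Finset.range p, by intro e; simp; omega, Finset.card_range p,
      (diag_range p).symm⟩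
  | tail hab hbc ih =>
    obtain ⟨S, hSN, hScard, rfl⟩ := ih
    obtain ⟨j, hj, hj1, hjN, hC'⟩ := step_forward hbc
    refine ⟨insert (j + 1) (S.erase j), ?_, ?_, hC'⟩
    · intro e he
      rcases Finset.mem_insert.mp he with rfl | he
      · simpa using hjN
      · exact hSN (Finset.mem_of_mem_erase he)
    · rw [Finset.card_insert_of_notMem (fun h => hj1 (Finset.mem_of_mem_erase h)),
        Finset.card_erase_of_mem hj, hScard]
      have : 0 < S.card := Finset.card_pos.mpr ⟨j, hj⟩
      omega

lemma backward {N p : ℕ} : ∀ n (S : Finset ℕ), (∑ x ∈ S, x) = n →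
    S ⊆ Finset.range N → S.card = p →
    diag S ∈ EYD (staircase N) (twoRow p 0 (Nat.zero_le p)) := by
  intro n
  induction n using Nat.strong_induction_on with
  | _ n ih =>
    intro S hsum hSN hScard
    by_cases hfull : ∃ j ∈ S, rnk S j < j
    · -- pick minimal such j
      obtain ⟨j, hjmem, hjlt⟩ := hfull
      set F := S.filter (fun j => rnk S j < j) with hF
      have hFne : F.Nonempty := ⟨j, by simp [hF, Finset.mem_filter]; exact ⟨hjmem, hjlt⟩⟩
      clear hjmem hjlt j
      set j := F.min' hFne with hjdef
      have hjF : j ∈ F := F.min'_mem hFne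
      have hjmem : j ∈ S := (Finset.mem_filter.mp hjF).1
      have hjlt : rnk S j < j := (Finset.mem_filter.mp hjF).2
      have hj1 : j ≥ 1 := by omega
      have hjm1 : j - 1 ∉ S := by
        intro hmem
        have h1 : rnk S j = rnk S (j - 1) + 1 := by
          have := rnk_succ_mem (S := S) (j := j - 1) hmem
          rwa [Nat.sub_add_cancel hj1] at this
        have h2 : j - 1 ∈ F := by
          rw [hF, Finset.mem_filter]
          exact ⟨hmem, by omega⟩
        have := F.min'_le _ h2
        omega
      set T := insert (j - 1) (S.erase j) with hT
      have hjT : j - 1 ∈ T := Finset.mem_insert_self _ _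
      have hjT1 : j ∉ T := by
        rw [hT]
        simp only [Finset.mem_insert, Finset.mem_erase]
        rintro (h | ⟨h, -⟩) <;> omega
      have hjN : j < N := by simpa using hSN hjmem
      have hTsum : (∑ x ∈ T, x) = n - 1 ∧ 1 ≤ n := by
        have h1 : (∑ x ∈ T, x) = (j - 1) + ∑ x ∈ S.erase j, x := by
          rw [hT, Finset.sum_insert (by
            simp only [Finset.mem_erase]; rintro ⟨-, h⟩; exact hjm1 h)]
        have h2 : (∑ x ∈ S.erase j, x) + j = ∑ x ∈ S, x :=
          Finset.sum_erase_add S _ hjmem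
        constructor <;> omega
      have hTN : T ⊆ Finset.range N := by
        intro e he
        rcases Finset.mem_insert.mp he with rfl | he
        · simp; omega
        · exact hSN (Finset.mem_of_mem_erase he)
      have hTcard : T.card = p := by
        rw [hT, Finset.card_insert_of_notMem (by
          simp only [Finset.mem_erase]; rintro ⟨-, h⟩; exact hjm1 h),
          Finset.card_erase_of_mem hjmem, hScard]
        have : 0 < S.card := Finset.card_pos.mpr ⟨j, hjmem⟩
        omega
      have hTmem := ih (n - 1) (by omega) T hTsum.1 hTN hTcard
      have hjT1' : j - 1 + 1 ∉ T := by rwa [Nat.sub_add_cancel hj1]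
      have hstep := exc_step_diag (N := N) hjT hjT1' (by omega)
      have hEq : insert (j - 1 + 1) (T.erase (j - 1)) = S := by
        rw [hT, Finset.erase_insert (by
          simp only [Finset.mem_erase]; rintro ⟨-, h⟩; exact hjm1 h),
          Nat.sub_add_cancel hj1, Finset.insert_erase hjmem]
      rw [hEq] at hstep
      exact Relation.ReflTransGen.tail hTmem hstep
    · -- S = range p
      push_neg at hfull
      have hrange : S = Finset.range p := by
        apply Finset.eq_of_subset_of_card_le
        · intro e he
          have h1 : rnk S e = e := le_antisymm (rnk_le S e) (hfull e he)
          have h2 : S.filter (fun x => x < e) = Finset.range e := by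
            apply Finset.eq_of_subset_of_card_le
            · intro x hx
              simp only [Finset.mem_filter] at hx
              simpa using hx.2
            · rw [Finset.card_range]
              exact h1.ge
          have h3 : Finset.range (e + 1) ⊆ S := by
            intro x hx
            rcases Nat.lt_succ_iff_lt_or_eq.mp (Finset.mem_range.mp hx) with h | rfl
            · have : x ∈ S.filter (fun y => y < e) := h2 ▸ Finset.mem_range.mpr h
              exact (Finset.mem_filter.mp this).1
            · exact he
          have := Finset.card_le_card h3
          rw [Finset.card_range, hScard] at this
          simpa using this
        · simp [Finset.card_range, hScard]
      rw [hrange, diag_range]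
      exact Relation.ReflTransGen.refl

end EydRow

/-- the number of excited Young diagrams of the one-row shape `(p)` inside the
staircase `ρ_N` is `binom(N, p)`. -/
theorem eyd_row_in_staircase_count (N p : ℕ) (h : p ≤ N) :
    Nat.card (EYD (staircase N) (twoRow p 0 (Nat.zero_le p))) = N.choose p := by
  classical
  have hset : EYD (staircase N) (twoRow p 0 (Nat.zero_le p))
      = EydRow.diag '' ↑(Finset.powersetCard p (Finset.range N)) := by
    ext C
    constructor
    · intro hC
      obtain ⟨S, h1, h2, h3⟩ := EydRow.forward h hC
      exact ⟨S, by rw [Finset.mem_coe, Finset.mem_powersetCard]; exact ⟨h1, h2⟩, h3.symm⟩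
    · rintro ⟨S, hS, rfl⟩
      rw [Finset.mem_coe, Finset.mem_powersetCard] at hS
      exact EydRow.backward _ S rfl hS.1 hS.2
  rw [hset, Nat.card_coe_set_eq,
    Set.ncard_image_of_injective _ EydRow.diag_injective,
    Set.ncard_coe_finset, Finset.card_powersetCard, Finset.card_range]
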